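/- arXiv:0801.1736 — 4 statements merged into one kernel-verified Lean document; each statement's English description precedes it below -/
import Mathlib

section
/- Fix ρ > 0 and positive real diagonal data d_1,…,d_N and d̃_1,…,d̃_K with at least one d_n > 0 and one d̃_k > 0. Then the system δ = (1/K) Σ_{n=1}^N d_n / (ρ(1 + δ̃ d_n)), δ̃ = (1/K) Σ_{k=1}^K d̃_k / (ρ(1 + δ d̃_k)) admits a unique solution (δ, δ̃) with δ > 0 and δ̃ > 0. -/
open Finset Set

/-- the generic map `S x = (1/Kr) * ∑ i, c i / (ρ * (1 + x * c i))` -/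
private noncomputable def sfpS {M : ℕ} (Kr ρ : ℝ) (c : Fin M → ℝ) (x : ℝ) : ℝ :=
  (1 / Kr) * ∑ i, c i / (ρ * (1 + x * c i))

private lemma sfp_den_pos {M : ℕ} {ρ : ℝ} (hρ : 0 < ρ) {c : Fin M → ℝ}
    (hc : ∀ i, 0 ≤ c i) {x : ℝ} (hx : 0 ≤ x) (i : Fin M) :
    0 < ρ * (1 + x * c i) := by nlinarith [hc i, mul_nonneg hx (hc i)]

private lemma sfp_pos {M : ℕ} {Kr ρ : ℝ} (hK : 0 < Kr) (hρ : 0 < ρ) {c : Fin M → ℝ}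
    (hc : ∀ i, 0 ≤ c i) (hc' : ∃ i, 0 < c i) {x : ℝ} (hx : 0 ≤ x) :
    0 < sfpS Kr ρ c x := by
  apply mul_pos (by positivity)
  obtain ⟨i, hi⟩ := hc'
  exact Finset.sum_pos' (fun j _ => div_nonneg (hc j) (sfp_den_pos hρ hc hx j).le)
    ⟨i, Finset.mem_univ i, div_pos hi (sfp_den_pos hρ hc hx i)⟩

private lemma sfp_anti {M : ℕ} {Kr ρ : ℝ} (hK : 0 < Kr) (hρ : 0 < ρ) {c : Fin M → ℝ}
    (hc : ∀ i, 0 ≤ c i) {x y : ℝ} (hx : 0 ≤ x) (hxy : x ≤ y) :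
    sfpS Kr ρ c y ≤ sfpS Kr ρ c x := by
  apply mul_le_mul_of_nonneg_left _ (by positivity)
  apply Finset.sum_le_sum
  intro i _
  have h1 := sfp_den_pos hρ hc hx i
  have h2 := sfp_den_pos hρ hc (hx.trans hxy) i
  gcongr
  · exact hc i
  · nlinarith [hc i]

private lemma sfp_sub {M : ℕ} {Kr ρ : ℝ} (hK : 0 < Kr) (hρ : 0 < ρ) {c : Fin M → ℝ}
    (hc : ∀ i, 0 ≤ c i) (hc' : ∃ i, 0 < c i) {x t : ℝ} (hx : 0 ≤ x) (ht : 1 < t) :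
    sfpS Kr ρ c x < t * sfpS Kr ρ c (t * x) := by
  have htx : 0 ≤ t * x := mul_nonneg (by linarith) hx
  have hsum : ∑ i, c i / (ρ * (1 + x * c i))
      < ∑ i, t * (c i / (ρ * (1 + (t * x) * c i))) := by
    obtain ⟨i, hi⟩ := hc'
    apply Finset.sum_lt_sum
    · intro j _
      have h1 := sfp_den_pos hρ hc hx j
      have h2 := sfp_den_pos hρ hc htx j
      rcases (hc j).lt_or_eq with hj | hj
      · rw [← mul_div_assoc, div_le_div_iff₀ h1 h2]
        nlinarith [mul_pos hj hρ, mul_pos (mul_pos hj hρ) (sub_pos.mpr ht),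
          mul_nonneg (mul_nonneg (mul_nonneg hj.le hρ.le) hx) (hc j)]
      · simp [← hj]
    · refine ⟨i, Finset.mem_univ i, ?_⟩
      have h1 := sfp_den_pos hρ hc hx i
      have h2 := sfp_den_pos hρ hc htx i
      rw [← mul_div_assoc, div_lt_div_iff₀ h1 h2]
      nlinarith [mul_pos hi hρ, mul_pos (mul_pos hi hρ) (sub_pos.mpr ht),
        mul_nonneg (mul_nonneg (mul_nonneg hi.le hρ.le) hx) (hc i)]
  calc sfpS Kr ρ c x = (1 / Kr) * ∑ i, c i / (ρ * (1 + x * c i)) := rfl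
    _ < (1 / Kr) * ∑ i, t * (c i / (ρ * (1 + (t * x) * c i))) :=
        mul_lt_mul_of_pos_left hsum (by positivity)
    _ = t * sfpS Kr ρ c (t * x) := by
        rw [← Finset.mul_sum]; unfold sfpS; ring

private lemma sfp_cont {M : ℕ} {Kr ρ : ℝ} (hρ : 0 < ρ) {c : Fin M → ℝ}
    (hc : ∀ i, 0 ≤ c i) : ContinuousOn (sfpS Kr ρ c) (Ici 0) := by
  apply ContinuousOn.mul continuousOn_const
  apply continuousOn_finset_sum
  intro i _
  apply ContinuousOn.div continuousOn_const
  · exact (continuous_const.mul ((continuous_const.add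
      (continuous_id.mul continuous_const)))).continuousOn
  · intro x hx
    exact (sfp_den_pos hρ hc hx i).ne'

/-- Existence and uniqueness of the positive solution of the separable fixed-point
system at `z = −ρ`:
`δ = (1/K) Σₙ dₙ/(ρ(1 + δ̃ dₙ))`, `δ̃ = (1/K) Σₖ d̃ₖ/(ρ(1 + δ d̃ₖ))`. -/
theorem stmt6 (N K : ℕ) (hK : 0 < K) (ρ : ℝ) (hρ : 0 < ρ)
    (d : Fin N → ℝ) (dt : Fin K → ℝ)
    (hd : ∀ n, 0 ≤ d n) (hdt : ∀ k, 0 ≤ dt k)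
    (hd' : ∃ n, 0 < d n) (hdt' : ∃ k, 0 < dt k) :
    ∃! p : ℝ × ℝ, 0 < p.1 ∧ 0 < p.2 ∧
      p.1 = (1 / K) * ∑ n, d n / (ρ * (1 + p.2 * d n)) ∧
      p.2 = (1 / K) * ∑ k, dt k / (ρ * (1 + p.1 * dt k)) := by
  have hKr : (0:ℝ) < (K:ℝ) := by exact_mod_cast hK
  set F : ℝ → ℝ := sfpS (K:ℝ) ρ d with hF
  set G : ℝ → ℝ := sfpS (K:ℝ) ρ dt with hG
  have hFpos : ∀ {x : ℝ}, 0 ≤ x → 0 < F x := fun hx => sfp_pos hKr hρ hd hd' hx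
  have hGpos : ∀ {x : ℝ}, 0 ≤ x → 0 < G x := fun hx => sfp_pos hKr hρ hdt hdt' hx
  -- uniqueness of positive fixed points of G ∘ F
  have key : ∀ x y : ℝ, 0 < x → 0 < y → G (F x) = x → G (F y) = y → x < y → False := by
    intro x y hx hy hfx hfy hxy
    set t : ℝ := y / x with htdef
    have ht : 1 < t := (one_lt_div hx).mpr hxy
    have htx : t * x = y := div_mul_cancel₀ y hx.ne'
    have h1 : F x < t * F y := by
      have := sfp_sub hKr hρ hd hd' hx.le ht
      rwa [htx] at this
    have h2 : F x / t ≤ F y := by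
      rw [div_le_iff₀ (by linarith)]
      linarith [h1]
    have h3 : G (F y) ≤ G (F x / t) :=
      sfp_anti hKr hρ hdt (div_nonneg (hFpos hx.le).le (by linarith)) h2
    have h4 : G (F x / t) < t * G (F x) := by
      have := sfp_sub hKr hρ hdt hdt'
        (div_nonneg (hFpos hx.le).le (by linarith : (0:ℝ) ≤ t)) ht
      rwa [mul_div_cancel₀ (F x) (by linarith : t ≠ 0)] at this
    rw [hfx] at h4
    rw [hfy] at h3
    have : y < y := by
      calc y ≤ G (F x / t) := h3
        _ < t * x := h4
        _ = y := htx
    exact lt_irrefl y this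
  -- existence of a positive fixed point of G ∘ F via IVT
  set B : ℝ := G 0 + 1 with hB
  have hB0 : 0 < B := by have := hGpos le_rfl; linarith
  have hcont : ContinuousOn (fun x => G (F x) - x) (Icc 0 B) := by
    apply ContinuousOn.sub _ continuousOn_id
    apply ((sfp_cont hρ hdt).comp ((sfp_cont hρ hd).mono (Icc_subset_Ici_self)))
    intro x hx
    exact (hFpos hx.1).le
  have hh0 : 0 < G (F 0) - 0 := by simpa using hGpos (hFpos le_rfl).le
  have hhB : G (F B) - B < 0 := by
    have : G (F B) ≤ G 0 := sfp_anti hKr hρ hdt le_rfl (hFpos hB0.le).le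
    linarith
  obtain ⟨x, hxmem, hx0⟩ : ∃ x ∈ Icc (0:ℝ) B, G (F x) - x = 0 := by
    have h0mem : (0:ℝ) ∈ Icc ((fun x => G (F x) - x) B) ((fun x => G (F x) - x) 0) := by
      constructor <;> simp only <;> linarith
    obtain ⟨x, hx, hx0⟩ := intermediate_value_Icc' hB0.le hcont h0mem
    exact ⟨x, hx, hx0⟩
  have hxfix : G (F x) = x := by linarith [hx0]
  have hxpos : 0 < x := by
    rw [← hxfix]; exact hGpos (hFpos hxmem.1).le
  -- conclude
  refine ⟨(F x, x), ⟨hFpos hxpos.le, hxpos, rfl, ?_⟩, ?_⟩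
  · exact hxfix.symm
  rintro ⟨a, b⟩ ⟨ha, hb, hab1, hab2⟩
  simp only at ha hb hab1 hab2 ⊢
  have hbF : a = F b := hab1
  have hGa : G a = (1 / (K:ℝ)) * ∑ k, dt k / (ρ * (1 + a * dt k)) := rfl
  have hbfix : G (F b) = b := by rw [← hbF, hGa]; exact hab2.symm
  have hbx : b = x := by
    rcases lt_trichotomy b x with h | h | h
    · exact absurd (key b x hb hxpos hbfix hxfix h) not_false
    · exact h
    · exact absurd (key x b hxpos hb hxfix hbfix h) not_false
  rw [Prod.mk.injEq]
  exact ⟨by rw [hbF, hbx], hbx⟩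
end

section
/- In the separable case with fixed-point values δ, δ̃ > 0 at z = −ρ, define T = (1/ρ)(I_N + δ̃ D)^{-1} and T̃ = (1/ρ)(I_K + δ D̃)^{-1}, γ = (1/K) tr(D² T²) and γ̃ = (1/K) tr(D̃² T̃²). Then ρ² γ γ̃ < 1. -/
/-!
Write `t = d / (ρ(1 + sd))` for an entry of `D T` (with `s = δ̃`). Since `ρ s t = sd / (1 + sd) < 1`,
we get `t² ≤ t / (ρ s)`, strictly where `d > 0`. Averaging and using the fixed-point equation gives
`γ < δ / (ρ δ̃)`, and symmetrically `γ̃ < δ̃ / (ρ δ)`; the product of the two bounds is `1 / ρ²`.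
-/

lemma div_mul_one_add_mul_lt {ρ s x : ℝ} (hρ : 0 < ρ) (hs : 0 < s) (hx : 0 ≤ x) :
    x / (ρ * (1 + s * x)) < 1 / (ρ * s) := by
  rw [div_lt_div_iff₀ (by positivity) (by positivity)]
  nlinarith

lemma sum_sq_lt_mul_sum {ι : Type*} [Fintype ι] {M : ℝ} {t : ι → ℝ}
    (ht : ∀ i, 0 ≤ t i) (htM : ∀ i, t i < M) (ht' : ∃ i, 0 < t i) :
    ∑ i, t i ^ 2 < M * ∑ i, t i := by
  rw [Finset.mul_sum]
  obtain ⟨j, hj⟩ := ht'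
  refine Finset.sum_lt_sum (fun i _ => ?_) ⟨j, Finset.mem_univ j, ?_⟩
  · rw [sq]; exact mul_le_mul_of_nonneg_right (htM i).le (ht i)
  · rw [sq]; exact mul_lt_mul_of_pos_right (htM j) hj

lemma mul_sum_sq_div_lt {ι : Type*} [Fintype ι] {c ρ s : ℝ} (hc : 0 < c) (hρ : 0 < ρ)
    (hs : 0 < s) {x : ι → ℝ} (hx : ∀ i, 0 ≤ x i) (hx' : ∃ i, 0 < x i) :
    c * ∑ i, x i ^ 2 / (ρ ^ 2 * (1 + s * x i) ^ 2) <
      (c * ∑ i, x i / (ρ * (1 + s * x i))) / (ρ * s) := by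
  have hpos : ∀ i, 0 < 1 + s * x i := fun i => by nlinarith [hx i]
  have hsq : ∀ i, x i ^ 2 / (ρ ^ 2 * (1 + s * x i) ^ 2) = (x i / (ρ * (1 + s * x i))) ^ 2 :=
    fun i => by rw [div_pow, mul_pow]
  have hbound : ∀ i, x i / (ρ * (1 + s * x i)) < 1 / (ρ * s) :=
    fun i => div_mul_one_add_mul_lt hρ hs (hx i)
  obtain ⟨j, hj⟩ := hx'
  calc c * ∑ i, x i ^ 2 / (ρ ^ 2 * (1 + s * x i) ^ 2)
      < c * (1 / (ρ * s) * ∑ i, x i / (ρ * (1 + s * x i))) := by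
        simp only [hsq]
        refine mul_lt_mul_of_pos_left (sum_sq_lt_mul_sum (fun i => ?_) hbound ?_) hc
        · exact div_nonneg (hx i) (mul_pos hρ (hpos i)).le
        · exact ⟨j, div_pos hj (mul_pos hρ (hpos j))⟩
    _ = (c * ∑ i, x i / (ρ * (1 + s * x i))) / (ρ * s) := by ring

/-- In the separable case at `z = −ρ`, with `γ = (1/K) tr(D²T²)` and
`γ̃ = (1/K) tr(D̃²T̃²)` where `T = (1/ρ)(I + δ̃D)⁻¹` and `T̃ = (1/ρ)(I + δD̃)⁻¹`,
one has `ρ²γγ̃ < 1`. -/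
theorem stmt10 (N K : ℕ) (hK : 0 < K) (ρ : ℝ) (hρ : 0 < ρ)
    (d : Fin N → ℝ) (dt : Fin K → ℝ)
    (hd : ∀ n, 0 ≤ d n) (hdt : ∀ k, 0 ≤ dt k)
    (hd' : ∃ n, 0 < d n) (hdt' : ∃ k, 0 < dt k)
    (δ δt : ℝ) (hδ : 0 < δ) (hδt : 0 < δt)
    (hfix : δ = (1 / K) * ∑ n, d n / (ρ * (1 + δt * d n)))
    (hfixt : δt = (1 / K) * ∑ k, dt k / (ρ * (1 + δ * dt k)))
    (γ γt : ℝ)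
    (hγ : γ = (1 / K) * ∑ n, d n ^ 2 / (ρ ^ 2 * (1 + δt * d n) ^ 2))
    (hγt : γt = (1 / K) * ∑ k, dt k ^ 2 / (ρ ^ 2 * (1 + δ * dt k) ^ 2)) :
    ρ ^ 2 * γ * γt < 1 := by
  have hc : (0 : ℝ) < 1 / K := by positivity
  have hγ_lt : γ < δ / (ρ * δt) := by
    simpa only [← hγ, ← hfix] using mul_sum_sq_div_lt hc hρ hδt hd hd'
  have hγt_lt : γt < δt / (ρ * δ) := by
    simpa only [← hγt, ← hfixt] using mul_sum_sq_div_lt hc hρ hδ hdt hdt'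
  have hγ_nonneg : 0 ≤ γ := by rw [hγ]; positivity
  have hγt_nonneg : 0 ≤ γt := by rw [hγt]; positivity
  calc ρ ^ 2 * γ * γt = ρ ^ 2 * (γ * γt) := by ring
    _ < ρ ^ 2 * (δ / (ρ * δt) * (δt / (ρ * δ))) :=
      mul_lt_mul_of_pos_left (mul_lt_mul'' hγ_lt hγt_lt hγ_nonneg hγt_nonneg) (by positivity)
    _ = 1 := by field_simp
end

section
/- In the separable case at z = −ρ with positive fixed point (δ, δ̃): the quantity γ = (1/K) Σ_n d_n²/(ρ²(1+δ̃ d_n)²) satisfies γ ≤ δ/(ρ δ̃) · max_n (δ̃ d_n/(1+δ̃ d_n)) < δ/(ρ δ̃). In particular γ < δ/(ρ δ̃) and symmetrically γ̃ < δ̃/(ρ δ), whence ρ² γ γ̃ < 1. -/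
/-- In the separable case at `z = −ρ` with positive fixed point `(δ, δ̃)`:
`γ ≤ δ/(ρδ̃) · maxₙ (δ̃dₙ/(1+δ̃dₙ))`, hence `γ < δ/(ρδ̃)`; symmetrically
`γ̃ < δ̃/(ρδ)`, whence `ρ²γγ̃ < 1`. -/
theorem stmt11 (N K : ℕ) (hN : 0 < N) (hK : 0 < K) (ρ : ℝ) (hρ : 0 < ρ)
    (d : Fin N → ℝ) (dt : Fin K → ℝ)
    (hd : ∀ n, 0 ≤ d n) (hdt : ∀ k, 0 ≤ dt k)
    (hd' : ∃ n, 0 < d n) (hdt' : ∃ k, 0 < dt k)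
    (δ δt : ℝ) (hδ : 0 < δ) (hδt : 0 < δt)
    (hfix : δ = (1 / (ρ * K)) * ∑ n, d n / (1 + δt * d n))
    (hfixt : δt = (1 / (ρ * K)) * ∑ k, dt k / (1 + δ * dt k))
    (γ γt : ℝ)
    (hγ : γ = (1 / (ρ ^ 2 * K)) * ∑ n, d n ^ 2 / (1 + δt * d n) ^ 2)
    (hγt : γt = (1 / (ρ ^ 2 * K)) * ∑ k, dt k ^ 2 / (1 + δ * dt k) ^ 2) :
    γ ≤ δ / (ρ * δt) *
        (Finset.univ.sup' (Finset.univ_nonempty_iff.mpr (Fin.pos_iff_nonempty.mp hN))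
          fun n => δt * d n / (1 + δt * d n)) ∧
    γ < δ / (ρ * δt) ∧ γt < δt / (ρ * δ) ∧ ρ ^ 2 * γ * γt < 1 := by
  have hK' : (0:ℝ) < (K:ℝ) := Nat.cast_pos.mpr hK
  have hne : (Finset.univ : Finset (Fin N)).Nonempty :=
    Finset.univ_nonempty_iff.mpr (Fin.pos_iff_nonempty.mp hN)
  set M := Finset.univ.sup' hne (fun n => δt * d n / (1 + δt * d n)) with hM
  clear_value M
  have hden : ∀ n, 0 < 1 + δt * d n := fun n => by
    have := mul_nonneg hδt.le (hd n); linarith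
  have hdent : ∀ k, 0 < 1 + δ * dt k := fun k => by
    have := mul_nonneg hδ.le (hdt k); linarith
  have hρK : ρ * (K:ℝ) ≠ 0 := by positivity
  have hS : ∑ n, d n / (1 + δt * d n) = ρ * K * δ := by
    rw [hfix, ← mul_assoc, mul_one_div_cancel hρK, one_mul]
  have hSt : ∑ k, dt k / (1 + δ * dt k) = ρ * K * δt := by
    rw [hfixt, ← mul_assoc, mul_one_div_cancel hρK, one_mul]
  -- M < 1
  have hM1 : M < 1 := by
    rw [hM, Finset.sup'_lt_iff]
    intro n _
    rw [div_lt_one (hden n)]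
    linarith
  -- Part 1
  have h1 : γ ≤ δ / (ρ * δt) * M := by
    have hterm : ∀ n ∈ Finset.univ, d n ^ 2 / (1 + δt * d n) ^ 2 ≤
        (M / δt) * (d n / (1 + δt * d n)) := by
      intro n _
      have hMn : δt * d n / (1 + δt * d n) ≤ M := by
        rw [hM]; exact Finset.le_sup' (fun n => δt * d n / (1 + δt * d n)) (Finset.mem_univ n)
      have ha : 0 ≤ d n / (1 + δt * d n) := div_nonneg (hd n) (hden n).le
      have hne0 : (1 + δt * d n) ≠ 0 := (hden n).ne'
      have heq : d n ^ 2 / (1 + δt * d n) ^ 2 =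
          (d n / (1 + δt * d n)) * (δt * d n / (1 + δt * d n)) / δt := by
        field_simp
      rw [heq]
      rw [div_le_iff₀ hδt]
      calc d n / (1 + δt * d n) * (δt * d n / (1 + δt * d n))
          ≤ d n / (1 + δt * d n) * M := mul_le_mul_of_nonneg_left hMn ha
        _ = M / δt * (d n / (1 + δt * d n)) * δt := by field_simp
    have hsum : ∑ n, d n ^ 2 / (1 + δt * d n) ^ 2 ≤ (M / δt) * (ρ * K * δ) := by
      calc ∑ n, d n ^ 2 / (1 + δt * d n) ^ 2
          ≤ ∑ n, (M / δt) * (d n / (1 + δt * d n)) := Finset.sum_le_sum hterm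
        _ = (M / δt) * (ρ * K * δ) := by rw [← Finset.mul_sum, hS]
    have hc : (0:ℝ) < 1 / (ρ ^ 2 * K) := by positivity
    calc γ ≤ (1 / (ρ ^ 2 * K)) * ((M / δt) * (ρ * K * δ)) := by
            rw [hγ]; exact mul_le_mul_of_nonneg_left hsum hc.le
      _ = δ / (ρ * δt) * M := by field_simp
  have hpos : 0 < δ / (ρ * δt) := by positivity
  have h2 : γ < δ / (ρ * δt) := by
    calc γ ≤ δ / (ρ * δt) * M := h1
      _ < δ / (ρ * δt) * 1 := by exact mul_lt_mul_of_pos_left hM1 hpos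
      _ = δ / (ρ * δt) := mul_one _
  -- Part 3
  obtain ⟨k0, hk0⟩ := hdt'
  have h3 : γt < δt / (ρ * δ) := by
    have hsum : ∑ k, dt k ^ 2 / (1 + δ * dt k) ^ 2 <
        ∑ k, (1 / δ) * (dt k / (1 + δ * dt k)) := by
      apply Finset.sum_lt_sum
      · intro k _
        have hb : δ * dt k / (1 + δ * dt k) ≤ 1 := by
          rw [div_le_one (hdent k)]; linarith
        have ha : 0 ≤ dt k / (1 + δ * dt k) := div_nonneg (hdt k) (hdent k).le
        have hne0 : (1 + δ * dt k) ≠ 0 := (hdent k).ne'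
        have heq : dt k ^ 2 / (1 + δ * dt k) ^ 2 =
            (dt k / (1 + δ * dt k)) * (δ * dt k / (1 + δ * dt k)) / δ := by
          field_simp
        rw [heq, div_le_iff₀ hδ]
        calc dt k / (1 + δ * dt k) * (δ * dt k / (1 + δ * dt k))
            ≤ dt k / (1 + δ * dt k) * 1 := mul_le_mul_of_nonneg_left hb ha
          _ = 1 / δ * (dt k / (1 + δ * dt k)) * δ := by field_simp
      · refine ⟨k0, Finset.mem_univ k0, ?_⟩
        have hb : δ * dt k0 / (1 + δ * dt k0) < 1 := by
          rw [div_lt_one (hdent k0)]; linarith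
        have ha : 0 < dt k0 / (1 + δ * dt k0) := div_pos hk0 (hdent k0)
        have hne0 : (1 + δ * dt k0) ≠ 0 := (hdent k0).ne'
        have heq : dt k0 ^ 2 / (1 + δ * dt k0) ^ 2 =
            (dt k0 / (1 + δ * dt k0)) * (δ * dt k0 / (1 + δ * dt k0)) / δ := by
          field_simp
        rw [heq, div_lt_iff₀ hδ]
        calc dt k0 / (1 + δ * dt k0) * (δ * dt k0 / (1 + δ * dt k0))
            < dt k0 / (1 + δ * dt k0) * 1 := mul_lt_mul_of_pos_left hb ha
          _ = 1 / δ * (dt k0 / (1 + δ * dt k0)) * δ := by field_simp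
    have hc : (0:ℝ) < 1 / (ρ ^ 2 * K) := by positivity
    calc γt = (1 / (ρ ^ 2 * K)) * ∑ k, dt k ^ 2 / (1 + δ * dt k) ^ 2 := hγt
      _ < (1 / (ρ ^ 2 * K)) * ∑ k, (1 / δ) * (dt k / (1 + δ * dt k)) :=
          mul_lt_mul_of_pos_left hsum hc
      _ = (1 / (ρ ^ 2 * K)) * ((1 / δ) * (ρ * K * δt)) := by
          rw [← Finset.mul_sum, hSt]
      _ = δt / (ρ * δ) := by field_simp
  -- Part 4
  have hγ0 : 0 ≤ γ := by
    rw [hγ]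
    apply mul_nonneg (by positivity)
    exact Finset.sum_nonneg fun n _ => by positivity
  have hAB : δ / (ρ * δt) * (δt / (ρ * δ)) = 1 / ρ ^ 2 := by
    field_simp
  have h4 : ρ ^ 2 * γ * γt < 1 := by
    have hB : 0 < δt / (ρ * δ) := by positivity
    have : γ * γt < δ / (ρ * δt) * (δt / (ρ * δ)) := by
      calc γ * γt ≤ γ * (δt / (ρ * δ)) := mul_le_mul_of_nonneg_left h3.le hγ0
        _ < δ / (ρ * δt) * (δt / (ρ * δ)) := mul_lt_mul_of_pos_right h2 hB
    rw [hAB] at this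
    have hρ2 : (0:ℝ) < ρ ^ 2 := by positivity
    calc ρ ^ 2 * γ * γt = ρ ^ 2 * (γ * γt) := by ring
      _ < ρ ^ 2 * (1 / ρ ^ 2) := by exact mul_lt_mul_of_pos_left this hρ2
      _ = 1 := by field_simp
  exact ⟨h1, h2, h3, h4⟩
end

section
/- In the separable case, the general variance formula reduces: with D_k = d̃_k D and D_0 = d̃_0 D, one has Θ_K² = d̃_0² Ω_K² where Ω_K² = γ[(μ₄ − 1) + ρ²γγ̃/(1 − ρ²γγ̃)], γ = (1/K)tr(D²T²), γ̃ = (1/K)tr(D̃²T̃²), T = (1/ρ)(I + δ̃D)^{-1}, T̃ = (1/ρ)(I + δD̃)^{-1}. -/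
/-!
In the separable case all the data of the variance formula are built from the single profile
`d̃`: with `u = Δ⁻¹ d̃` one has `A = (γ/K) u d̃ᵀ` and `g = d̃₀ γ d̃`. Hence `I - A` is a rank-one
perturbation of the identity, inverted by the Sherman–Morrison formula, and the quadratic form
`gᵀ(I - A)⁻¹Δ⁻¹g` collapses to `(d̃₀γ)² d̃ᵀu / (1 - (γ/K) d̃ᵀu)` with `(γ/K) d̃ᵀu = ρ²γγ̃`.

Sherman–Morrison applies because `ρ²γγ̃ < 1`: since `ρ tₙ (1 + δ̃ dₙ) = 1`, the fixed-point
equation gives `Σ dₙtₙ - ρδ̃ Σ dₙ²tₙ² = ρ Σ dₙtₙ² > 0`, i.e. `ρδ̃γ < δ`, and symmetrically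
`ρδγ̃ ≤ δ̃`; multiplying the two yields the claim.
-/

open Matrix

namespace Matrix

variable {n R : Type*} [Fintype n] [DecidableEq n] [Field R]

theorem inv_one_sub_vecMulVec {u v : n → R} (h : v ⬝ᵥ u ≠ 1) :
    (1 - vecMulVec u v)⁻¹ = 1 + (1 - v ⬝ᵥ u)⁻¹ • vecMulVec u v := by
  have hsq : vecMulVec u v * vecMulVec u v = (v ⬝ᵥ u) • vecMulVec u v := by
    rw [vecMulVec_mul_vecMulVec, vecMulVec_smul]
  have hc : 1 - v ⬝ᵥ u ≠ 0 := sub_ne_zero.mpr h.symm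
  refine inv_eq_right_inv ?_
  rw [sub_mul, one_mul, mul_add, mul_one, Matrix.mul_smul, hsq]
  linear_combination (norm := module) inv_mul_cancel₀ hc • vecMulVec u v

theorem dotProduct_inv_one_sub_smul_vecMulVec_mulVec {u v : n → R} {c : R}
    (h : c * (v ⬝ᵥ u) ≠ 1) :
    v ⬝ᵥ ((1 - c • vecMulVec u v)⁻¹ *ᵥ u) = (v ⬝ᵥ u) / (1 - c * (v ⬝ᵥ u)) := by
  have h' : v ⬝ᵥ (c • u) ≠ 1 := by rwa [dotProduct_smul, smul_eq_mul]
  have hc : 1 - c * (v ⬝ᵥ u) ≠ 0 := sub_ne_zero.mpr h.symm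
  rw [← smul_vecMulVec, inv_one_sub_vecMulVec h', add_mulVec, one_mulVec, smul_mulVec,
    vecMulVec_mulVec, op_smul_eq_smul, dotProduct_add]
  simp only [dotProduct_smul, smul_eq_mul]
  rw [div_eq_inv_mul]
  linear_combination (-(v ⬝ᵥ u)) * inv_mul_cancel₀ hc

theorem inv_diagonal_mulVec {e : n → R} (he : ∀ i, e i ≠ 0) (x : n → R) :
    (diagonal e)⁻¹ *ᵥ x = fun i => x i / e i := by
  have hinv : (diagonal e)⁻¹ = diagonal fun i => (e i)⁻¹ := by
    refine inv_eq_left_inv ?_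
    rw [diagonal_mul_diagonal, ← diagonal_one]
    exact congrArg diagonal (funext fun i => inv_mul_cancel₀ (he i))
  ext i
  rw [hinv, mulVec_diagonal, inv_mul_eq_div]

end Matrix

theorem mul_mul_one_add_mul_eq_one {ρ a x τ : ℝ} (hρ : 0 < ρ) (ha : 0 ≤ a) (hx : 0 ≤ x)
    (hτ : τ = 1 / (ρ * (1 + a * x))) : ρ * τ * (1 + a * x) = 1 := by
  have : 0 < 1 + a * x := by positivity
  rw [hτ]
  field_simp

section FixedPoint

variable {ι : Type*} [Fintype ι] {ρ a : ℝ} {x τ : ι → ℝ}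

theorem sum_mul_sub_mul_sum_sq_mul_sq (hτ : ∀ i, ρ * τ i * (1 + a * x i) = 1) :
    ∑ i, x i * τ i - ρ * a * ∑ i, x i ^ 2 * τ i ^ 2 = ρ * ∑ i, x i * τ i ^ 2 := by
  simp only [Finset.mul_sum, ← Finset.sum_sub_distrib]
  exact Finset.sum_congr rfl fun i _ => by linear_combination (-(x i * τ i)) * hτ i

theorem mul_sum_sq_mul_sq_le (hρ : 0 ≤ ρ) (hx : ∀ i, 0 ≤ x i)
    (hτ : ∀ i, ρ * τ i * (1 + a * x i) = 1) :
    ρ * a * ∑ i, x i ^ 2 * τ i ^ 2 ≤ ∑ i, x i * τ i := by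
  have := sum_mul_sub_mul_sum_sq_mul_sq hτ
  have : 0 ≤ ρ * ∑ i, x i * τ i ^ 2 :=
    mul_nonneg hρ (Finset.sum_nonneg fun i _ => mul_nonneg (hx i) (sq_nonneg _))
  linarith

theorem mul_sum_sq_mul_sq_lt (hρ : 0 < ρ) (hx : ∀ i, 0 ≤ x i) (hx' : ∃ i, 0 < x i)
    (hτ : ∀ i, ρ * τ i * (1 + a * x i) = 1) :
    ρ * a * ∑ i, x i ^ 2 * τ i ^ 2 < ∑ i, x i * τ i := by
  obtain ⟨i₀, hi₀⟩ := hx'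
  have hτ₀ : τ i₀ ≠ 0 := fun h => by simpa [h] using hτ i₀
  have := sum_mul_sub_mul_sum_sq_mul_sq hτ
  have : 0 < ρ * ∑ i, x i * τ i ^ 2 := mul_pos hρ <| Finset.sum_pos'
    (fun i _ => mul_nonneg (hx i) (sq_nonneg _)) ⟨i₀, Finset.mem_univ _, by positivity⟩
  linarith

theorem sq_mul_mul_lt_one_of_fixedPoint {κ : Type*} [Fintype κ] {c δ δt : ℝ} {d t : ι → ℝ}
    {dt tt : κ → ℝ} (hρ : 0 < ρ) (hc : 0 < c) (hd : ∀ i, 0 ≤ d i) (hdt : ∀ k, 0 ≤ dt k)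
    (hd' : ∃ i, 0 < d i) (hδ : 0 < δ) (hδt : 0 < δt)
    (ht : ∀ i, t i = 1 / (ρ * (1 + δt * d i))) (htt : ∀ k, tt k = 1 / (ρ * (1 + δ * dt k)))
    (hfix : δ = c * ∑ i, d i * t i) (hfixt : δt = c * ∑ k, dt k * tt k) :
    ρ ^ 2 * (c * ∑ i, d i ^ 2 * t i ^ 2) * (c * ∑ k, dt k ^ 2 * tt k ^ 2) < 1 := by
  have h₁ := mul_sum_sq_mul_sq_lt hρ hd hd'
    fun i => mul_mul_one_add_mul_eq_one hρ hδt.le (hd i) (ht i)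
  have h₂ := mul_sum_sq_mul_sq_le hρ.le hdt
    fun k => mul_mul_one_add_mul_eq_one hρ hδ.le (hdt k) (htt k)
  have hγ : 0 ≤ c * ∑ i, d i ^ 2 * t i ^ 2 := by positivity
  have h₁' : ρ * δt * (c * ∑ i, d i ^ 2 * t i ^ 2) < δ := by nlinarith
  have h₂' : ρ * δ * (c * ∑ k, dt k ^ 2 * tt k ^ 2) ≤ δt := by nlinarith
  nlinarith [mul_pos hδ hδt, mul_nonneg (mul_nonneg hρ.le hδt.le) hγ]

end FixedPoint

theorem stmt17_general (N K : ℕ) (hK : 0 < K) (ρ : ℝ) (hρ : 0 < ρ)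
    (d : Fin N → ℝ) (dt : Fin K → ℝ) (dt0 : ℝ)
    (hd : ∀ n, 0 ≤ d n) (hdt : ∀ k, 0 ≤ dt k)
    (hd' : ∃ n, 0 < d n)
    (μ₄ : ℝ)
    (δ δt : ℝ) (hδ : 0 < δ) (hδt : 0 < δt)
    (hfix : δ = (1 / K) * ∑ n, d n / (ρ * (1 + δt * d n)))
    (hfixt : δt = (1 / K) * ∑ k, dt k / (ρ * (1 + δ * dt k)))
    (t : Fin N → ℝ) (ht : ∀ n, t n = 1 / (ρ * (1 + δt * d n)))
    (tt : Fin K → ℝ) (htt : ∀ k, tt k = 1 / (ρ * (1 + δ * dt k)))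
    (γ γt : ℝ)
    (hγ : γ = (1 / K) * ∑ n, (d n) ^ 2 * (t n) ^ 2)
    (hγt : γt = (1 / K) * ∑ k, (dt k) ^ 2 * (tt k) ^ 2)
    (A : Matrix (Fin K) (Fin K) ℝ)
    (hA : ∀ l m, A l m = (1 / K) *
      ((1 / K) * ∑ n, (dt l * d n) * (dt m * d n) * (t n) ^ 2) /
      (1 + (1 / K) * ∑ n, dt l * d n * t n) ^ 2)
    (Δ : Matrix (Fin K) (Fin K) ℝ)
    (hΔ : Δ = Matrix.diagonal fun l => (1 + (1 / K) * ∑ n, dt l * d n * t n) ^ 2)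
    (g : Fin K → ℝ)
    (hg : ∀ l, g l = (1 / K) * ∑ n, (dt0 * d n) * (dt l * d n) * (t n) ^ 2)
    (Θsq Ωsq : ℝ)
    (hΘ : Θsq = (μ₄ - 1) * ((1 / K) * ∑ n, (dt0 * d n) ^ 2 * (t n) ^ 2)
        + (1 / K) * (g ⬝ᵥ (((1 - A)⁻¹ * Δ⁻¹) *ᵥ g)))
    (hΩ : Ωsq = γ * ((μ₄ - 1) + ρ ^ 2 * γ * γt / (1 - ρ ^ 2 * γ * γt))) :
    Θsq = dt0 ^ 2 * Ωsq := by
  have hfix' : δ = (1 / K) * ∑ n, d n * t n := by simpa only [ht, mul_one_div] using hfix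
  have hfixt' : δt = (1 / K) * ∑ k, dt k * tt k := by simpa only [htt, mul_one_div] using hfixt
  have hs : ρ ^ 2 * γ * γt < 1 := hγ ▸ hγt ▸
    sq_mul_mul_lt_one_of_fixedPoint hρ (by positivity) hd hdt hd' hδ hδt ht htt hfix' hfixt'
  have hsep : ∀ a b : ℝ, (1 / K) * ∑ n, (a * d n) * (b * d n) * t n ^ 2 = a * b * γ :=
    fun a b => by simp only [hγ, Finset.mul_sum]; exact Finset.sum_congr rfl fun n _ => by ring
  have hdiag : ∀ l, (1 / K) * ∑ n, dt l * d n * t n = δ * dt l := fun l => by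
    simp only [hfix', Finset.mul_sum, Finset.sum_mul]; exact Finset.sum_congr rfl fun n _ => by ring
  simp only [hdiag] at hA hΔ
  set u : Fin K → ℝ := fun l => dt l / (1 + δ * dt l) ^ 2 with hu
  have hdtu : dt ⬝ᵥ u = ρ ^ 2 * K * γt := by
    simp only [dotProduct, hu, hγt, Finset.mul_sum]
    exact Finset.sum_congr rfl fun l _ => by rw [htt l]; field_simp
  have hA' : A = (γ / K) • vecMulVec u dt := by
    ext l m; simp only [hA, hsep, hu, Matrix.smul_apply, vecMulVec_apply, smul_eq_mul]; ring
  have hg' : g = (dt0 * γ) • dt := by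
    ext l; simp only [hg, hsep, Pi.smul_apply, smul_eq_mul]; ring
  have hΔg : Δ⁻¹ *ᵥ g = (dt0 * γ) • u := by
    rw [hΔ, inv_diagonal_mulVec (fun l => by have := hdt l; positivity), hg', hu]
    ext l; simp only [Pi.smul_apply, smul_eq_mul]; ring
  have hcs : γ / K * (dt ⬝ᵥ u) = ρ ^ 2 * γ * γt := by rw [hdtu]; field_simp
  have hfirst : (1 / K) * ∑ n, (dt0 * d n) ^ 2 * t n ^ 2 = dt0 ^ 2 * γ := by
    simpa only [← sq] using hsep dt0 dt0
  rw [hΘ, hΩ, ← mulVec_mulVec, hΔg, hA', mulVec_smul, hg', smul_dotProduct, dotProduct_smul,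
    dotProduct_inv_one_sub_smul_vecMulVec_mulVec (hcs ▸ hs.ne), hcs, hdtu, hfirst]
  field_simp
  ring

/-- In the separable case `σ²_{nk} = dₙ d̃ₖ` (with `D_k = d̃ₖ D`, `D_0 = d̃₀ D`), the
general variance `Θ² = (μ₄−1)(1/K)tr(D₀²T²) + (1/K)gᵀ(I−A)⁻¹Δ⁻¹g` of Theorem 2 reduces
to `Θ² = d̃₀² Ω²` with `Ω² = γ[(μ₄−1) + ρ²γγ̃/(1−ρ²γγ̃)]`, where `γ = (1/K)tr(D²T²)`,
`γ̃ = (1/K)tr(D̃²T̃²)`, `T = (1/ρ)(I+δ̃D)⁻¹`, `T̃ = (1/ρ)(I+δD̃)⁻¹`. -/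
theorem stmt17 (N K : ℕ) (hK : 0 < K) (ρ : ℝ) (hρ : 0 < ρ)
    (d : Fin N → ℝ) (dt : Fin K → ℝ) (dt0 : ℝ)
    (hd : ∀ n, 0 ≤ d n) (hdt : ∀ k, 0 ≤ dt k) (hdt0 : 0 ≤ dt0)
    (hd' : ∃ n, 0 < d n) (hdt' : ∃ k, 0 < dt k)
    (μ₄ : ℝ) (hμ₄ : 1 ≤ μ₄)
    (δ δt : ℝ) (hδ : 0 < δ) (hδt : 0 < δt)
    (hfix : δ = (1 / K) * ∑ n, d n / (ρ * (1 + δt * d n)))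
    (hfixt : δt = (1 / K) * ∑ k, dt k / (ρ * (1 + δ * dt k)))
    (t : Fin N → ℝ) (ht : ∀ n, t n = 1 / (ρ * (1 + δt * d n)))
    (tt : Fin K → ℝ) (htt : ∀ k, tt k = 1 / (ρ * (1 + δ * dt k)))
    (γ γt : ℝ)
    (hγ : γ = (1 / K) * ∑ n, (d n) ^ 2 * (t n) ^ 2)
    (hγt : γt = (1 / K) * ∑ k, (dt k) ^ 2 * (tt k) ^ 2)
    (A : Matrix (Fin K) (Fin K) ℝ)
    (hA : ∀ l m, A l m = (1 / K) *
      ((1 / K) * ∑ n, (dt l * d n) * (dt m * d n) * (t n) ^ 2) /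
      (1 + (1 / K) * ∑ n, dt l * d n * t n) ^ 2)
    (Δ : Matrix (Fin K) (Fin K) ℝ)
    (hΔ : Δ = Matrix.diagonal fun l => (1 + (1 / K) * ∑ n, dt l * d n * t n) ^ 2)
    (g : Fin K → ℝ)
    (hg : ∀ l, g l = (1 / K) * ∑ n, (dt0 * d n) * (dt l * d n) * (t n) ^ 2)
    (Θsq Ωsq : ℝ)
    (hΘ : Θsq = (μ₄ - 1) * ((1 / K) * ∑ n, (dt0 * d n) ^ 2 * (t n) ^ 2)
        + (1 / K) * (g ⬝ᵥ (((1 - A)⁻¹ * Δ⁻¹) *ᵥ g)))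
    (hΩ : Ωsq = γ * ((μ₄ - 1) + ρ ^ 2 * γ * γt / (1 - ρ ^ 2 * γ * γt))) :
    Θsq = dt0 ^ 2 * Ωsq :=
  stmt17_general N K hK ρ hρ d dt dt0 hd hdt hd' μ₄ δ δt hδ hδt hfix hfixt t ht tt htt γ γt hγ hγt A
    hA Δ hΔ g hg Θsq Ωsq hΘ hΩ
end
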